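/- arXiv:1910.10945 — 7 statements merged into one kernel-verified Lean document; each statement's English description precedes it below -/
import Mathlib

section
/- Lower Gaussian tail bound: if X is a normal random variable with mean m and variance s^2 > 0, and t ≥ m, then P(X ≥ t) ≥ (1/√(2π)) exp(-(t - m + s)^2/(2 s^2)). -/
open MeasureTheory ProbabilityTheory Real

theorem gaussian_lower_tail (m s t : ℝ) (hs : 0 < s) (ht : m ≤ t) :
    ENNReal.ofReal ((1 / Real.sqrt (2 * Real.pi)) *
        Real.exp (-(t - m + s) ^ 2 / (2 * s ^ 2)))
      ≤ (gaussianReal m (⟨s ^ 2, sq_nonneg s⟩ : NNReal)) {x : ℝ | t ≤ x} := by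
  set v : NNReal := ⟨s ^ 2, sq_nonneg s⟩ with hv
  have hv0 : v ≠ 0 := by
    simp only [hv, ne_eq, ← NNReal.coe_eq_zero, NNReal.coe_mk]
    exact fun h => pow_ne_zero 2 hs.ne' (congrArg NNReal.toReal h)
  rw [gaussianReal_apply _ hv0]
  have hsub : Set.Icc t (t + s) ⊆ {x : ℝ | t ≤ x} := fun x hx ↦ hx.1
  calc ENNReal.ofReal ((1 / Real.sqrt (2 * Real.pi)) *
        Real.exp (-(t - m + s) ^ 2 / (2 * s ^ 2)))
      = ∫⁻ _ in Set.Icc t (t + s),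
          ENNReal.ofReal (gaussianPDFReal m v (t + s)) := by
        rw [setLIntegral_const, Real.volume_Icc]
        rw [show t + s - t = s by ring, ← ENNReal.ofReal_mul (gaussianPDFReal_nonneg _ _ _)]
        congr 1
        rw [gaussianPDFReal]
        have h2 : ((v : ℝ)) = s ^ 2 := rfl
        rw [h2]
        have : Real.sqrt (2 * Real.pi * s ^ 2) = Real.sqrt (2 * Real.pi) * s := by
          rw [Real.sqrt_mul (by positivity), Real.sqrt_sq hs.le]
        rw [this]
        have hsq : Real.sqrt (2 * Real.pi) > 0 := Real.sqrt_pos.mpr (by positivity)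
        have : -(t - m + s) ^ 2 = -(t + s - m) ^ 2 := by ring_nf
        rw [this]
        field_simp
    _ ≤ ∫⁻ x in Set.Icc t (t + s), gaussianPDF m v x := by
        refine setLIntegral_mono (measurable_gaussianPDF m v) fun x hx ↦ ?_
        rw [gaussianPDF]
        refine ENNReal.ofReal_le_ofReal ?_
        rw [gaussianPDFReal, gaussianPDFReal]
        refine mul_le_mul_of_nonneg_left (Real.exp_le_exp.mpr ?_) (by positivity)
        have h2 : ((v : ℝ)) = s ^ 2 := rfl
        rw [h2]
        refine div_le_div_of_nonneg_right ?_ (by positivity)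
        have h1 : 0 ≤ x - m := by linarith [hx.1]
        have h2 : x - m ≤ t + s - m := by linarith [hx.2]
        nlinarith
    _ ≤ ∫⁻ x in {x : ℝ | t ≤ x}, gaussianPDF m v x :=
        lintegral_mono_set hsub
end

section
/- If θ_i and θ_j are independent Gaussians with means μ_i ≤ μ_j and variances σ_i^2, σ_j^2, then P(θ_i ≥ θ_j) ≥ (1/√(2π)) exp(-(μ_j - μ_i + σ)^2/(2σ^2)) where σ^2 = σ_i^2 + σ_j^2. -/
open MeasureTheory ProbabilityTheory Real

lemma gaussian_tail_lb (m t v : ℝ) (hv : 0 < v) (hm : m ≤ t) :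
    ENNReal.ofReal ((1 / Real.sqrt (2 * Real.pi)) *
        Real.exp (-(t - m + Real.sqrt v) ^ 2 / (2 * v)))
      ≤ gaussianReal m (.mk v hv.le) {x | t ≤ x} := by
  have hv0 : ((.mk v hv.le) : NNReal) ≠ 0 := by
    simp [← NNReal.coe_ne_zero, hv.ne']
  rw [gaussianReal_apply_eq_integral m hv0]
  apply ENNReal.ofReal_le_ofReal
  have hsv : 0 < Real.sqrt v := Real.sqrt_pos.2 hv
  have hset : {x : ℝ | t ≤ x} = Set.Ici t := rfl
  rw [hset]
  have hIcc : Set.Icc t (t + Real.sqrt v) ⊆ Set.Ici t := Set.Icc_subset_Ici_self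
  have hint : IntegrableOn (gaussianPDFReal m (.mk v hv.le)) (Set.Ici t) :=
    (integrable_gaussianPDFReal m _).integrableOn
  have step1 : ∫ x in Set.Icc t (t + Real.sqrt v), gaussianPDFReal m (.mk v hv.le) x
      ≤ ∫ x in Set.Ici t, gaussianPDFReal m (.mk v hv.le) x := by
    apply setIntegral_mono_set hint
    · exact ae_of_all _ fun x => gaussianPDFReal_nonneg _ _ _
    · exact Filter.Eventually.of_forall hIcc
  refine le_trans ?_ step1
  have step2 : ∫ x in Set.Icc t (t + Real.sqrt v),
      ((Real.sqrt (2 * Real.pi * v))⁻¹ *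
        Real.exp (-(t - m + Real.sqrt v) ^ 2 / (2 * v)))
      ≤ ∫ x in Set.Icc t (t + Real.sqrt v), gaussianPDFReal m (.mk v hv.le) x := by
    apply setIntegral_mono_on
    · exact integrableOn_const measure_Icc_lt_top.ne
    · exact hint.mono_set hIcc
    · exact measurableSet_Icc
    · intro x hx
      rw [gaussianPDFReal]
      apply mul_le_mul_of_nonneg_left _ (by positivity)
      apply Real.exp_le_exp.2
      simp only [NNReal.coe_mk]
      rw [div_le_div_iff₀ (by positivity) (by positivity)]
      have h1 : 0 ≤ x - m := by linarith [hx.1]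
      have h2 : x - m ≤ t - m + Real.sqrt v := by linarith [hx.2]
      nlinarith [mul_self_le_mul_self h1 h2, hv]
  refine le_trans ?_ step2
  rw [setIntegral_const, Real.volume_real_Icc_of_le (by linarith)]
  have : t + Real.sqrt v - t = Real.sqrt v := by ring
  have hs2 : Real.sqrt (2 * Real.pi * v) = Real.sqrt (2 * Real.pi) * Real.sqrt v :=
    Real.sqrt_mul (by positivity) v
  rw [this, smul_eq_mul, hs2]
  apply le_of_eq
  rw [one_div, mul_inv]
  field_simp

lemma gaussian_lowtail_lb (m t v : ℝ) (hv : 0 < v) (hm : t ≤ m) :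
    ENNReal.ofReal ((1 / Real.sqrt (2 * Real.pi)) *
        Real.exp (-(m - t + Real.sqrt v) ^ 2 / (2 * v)))
      ≤ gaussianReal m (.mk v hv.le) {x | x ≤ t} := by
  have h2 := gaussian_tail_lb (-m) (-t) v hv (by linarith)
  have hone : ((.mk ((-1 : ℝ) ^ 2) (sq_nonneg _)) : NNReal) * (.mk v hv.le) = (.mk v hv.le) := by
    ext; push_cast; norm_num
  have hmap : (gaussianReal m (.mk v hv.le)).map (fun x => -1 * x)
      = gaussianReal (-m) (.mk v hv.le) := by
    rw [show (fun x : ℝ => -1 * x) = ((-1 : ℝ) * ·) from rfl, gaussianReal_map_const_mul,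
      hone]
    norm_num
  have hma : (Measure.map (fun x : ℝ => -1 * x) (gaussianReal m (.mk v hv.le))) {x | -t ≤ x}
      = (gaussianReal m (.mk v hv.le)) ((fun x : ℝ => -1 * x) ⁻¹' {x | -t ≤ x}) :=
    Measure.map_apply (by fun_prop) (measurableSet_le measurable_const measurable_id)
  rw [← hmap, hma] at h2
  have hpre : ((fun x : ℝ => -1 * x) ⁻¹' {x | -t ≤ x}) = {x | x ≤ t} := by
    ext x
    simp only [Set.mem_preimage, Set.mem_setOf_eq]
    constructor <;> intro <;> linarith
  rw [hpre] at h2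
  have he : -t - -m = m - t := by ring
  rwa [he] at h2

lemma gaussian_conv_pdf (m1 m2 u : ℝ) {v1 v2 : ℝ} (h1 : 0 < v1) (h2 : 0 < v2) :
    ∫ x, gaussianPDFReal m1 (.mk v1 h1.le) x * gaussianPDFReal m2 (.mk v2 h2.le) (x - u) =
      gaussianPDFReal (m1 - m2) (.mk (v1 + v2) (by positivity)) u := by
  have hpi : (0:ℝ) < Real.pi := Real.pi_pos
  set b := (v1 + v2) / (2 * v1 * v2) with hbdef
  have hb : (0:ℝ) < b := by positivity
  set c := (m1 * v2 + (u + m2) * v1) / (v1 + v2) with hcdef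
  set d := (u - (m1 - m2)) ^ 2 / (2 * (v1 + v2)) with hddef
  have hexp : ∀ x : ℝ, gaussianPDFReal m1 (.mk v1 h1.le) x * gaussianPDFReal m2 (.mk v2 h2.le) (x - u)
      = ((Real.sqrt (2*Real.pi*v1))⁻¹ * (Real.sqrt (2*Real.pi*v2))⁻¹ * Real.exp (-d))
        * Real.exp (-b * (x - c)^2) := by
    intro x
    simp only [gaussianPDFReal, NNReal.coe_mk]
    have harg : -(x - m1)^2/(2*v1) + -(x - u - m2)^2/(2*v2) = -d + -b*(x-c)^2 := by
      rw [hddef, hbdef, hcdef]; field_simp; ring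
    rw [mul_mul_mul_comm, ← Real.exp_add, harg, Real.exp_add]; ring
  rw [integral_congr_ae (ae_of_all _ hexp), integral_const_mul,
    (measurePreserving_sub_right volume c).integral_comp
      (MeasurableEquiv.subRight c).measurableEmbedding (fun y => Real.exp (-b * y^2)),
    integral_gaussian]
  have hAB : Real.pi / b = (2*Real.pi*v1) * (2*Real.pi*v2) / (2*Real.pi*(v1+v2)) := by
    rw [hbdef]; field_simp
  have hs : Real.sqrt (Real.pi / b)
      = Real.sqrt (2*Real.pi*v1) * Real.sqrt (2*Real.pi*v2) / Real.sqrt (2*Real.pi*(v1+v2)) := by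
    rw [hAB, Real.sqrt_div (by positivity), Real.sqrt_mul (by positivity)]
  rw [hs]
  simp only [gaussianPDFReal, NNReal.coe_mk]
  have e1 : Real.sqrt (2*Real.pi*v1) ≠ 0 := by positivity
  have e2 : Real.sqrt (2*Real.pi*v2) ≠ 0 := by positivity
  have e3 : Real.sqrt (2*Real.pi*(v1+v2)) ≠ 0 := by positivity
  rw [hddef]
  field_simp

lemma prod_gaussian_apply (m1 m2 : ℝ) {v1 v2 : ℝ} (h1 : 0 < v1) (h2 : 0 < v2) :
    ((gaussianReal m1 (.mk v1 h1.le)).prod (gaussianReal m2 (.mk v2 h2.le))) {p : ℝ × ℝ | p.2 ≤ p.1}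
      = gaussianReal (m1 - m2) (.mk (v1 + v2) (by positivity)) {x | 0 ≤ x} := by
  have hv1 : ((.mk v1 h1.le) : NNReal) ≠ 0 := by simp [← NNReal.coe_ne_zero, h1.ne']
  have hv2 : ((.mk v2 h2.le) : NNReal) ≠ 0 := by simp [← NNReal.coe_ne_zero, h2.ne']
  have hv12 : ((.mk (v1 + v2) (by positivity)) : NNReal) ≠ 0 := by
    rw [← NNReal.coe_ne_zero]; push_cast; positivity
  have hS : MeasurableSet {p : ℝ × ℝ | p.2 ≤ p.1} :=
    measurableSet_le measurable_snd measurable_fst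
  set g1 := gaussianPDF m1 (.mk v1 h1.le) with hg1
  set g2 := gaussianPDF m2 (.mk v2 h2.le) with hg2
  rw [gaussianReal_of_var_ne_zero _ hv1, gaussianReal_of_var_ne_zero _ hv2,
    gaussianReal_of_var_ne_zero _ hv12]
  rw [Measure.prod_apply hS]
  have hνmeas : Measurable fun x : ℝ =>
      (volume.withDensity g2) (Prod.mk x ⁻¹' {p : ℝ × ℝ | p.2 ≤ p.1}) :=
    measurable_measure_prodMk_left hS
  rw [lintegral_withDensity_eq_lintegral_mul _ (measurable_gaussianPDF _ _) hνmeas]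
  have hinner : ∀ x : ℝ, (volume.withDensity g2) (Prod.mk x ⁻¹' {p : ℝ × ℝ | p.2 ≤ p.1})
      = ∫⁻ u in Set.Ici (0:ℝ), g2 (x - u) := by
    intro x
    have hpre : (Prod.mk x ⁻¹' {p : ℝ × ℝ | p.2 ≤ p.1}) = Set.Iic x := rfl
    rw [hpre, withDensity_apply _ measurableSet_Iic]
    have hmp : MeasurePreserving (fun u : ℝ => x - u)
        (volume.restrict (Set.Ici (0:ℝ))) (volume.restrict (Set.Iic x)) := by
      have h0 : ((fun u : ℝ => x - u) ⁻¹' Set.Iic x) = Set.Ici (0:ℝ) := by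
        ext u; simp
      have hmp0 : MeasurePreserving (fun u : ℝ => x - u) volume volume := by
        simp_rw [sub_eq_add_neg]
        exact (measurePreserving_add_left volume x).comp (Measure.measurePreserving_neg volume)
      have := hmp0.restrict_preimage (measurableSet_Iic (a := x))
      rwa [h0] at this
    rw [← hmp.lintegral_comp (measurable_gaussianPDF _ _)]
  have step : ∫⁻ x, (g1 * fun x =>
        (volume.withDensity g2) (Prod.mk x ⁻¹' {p : ℝ × ℝ | p.2 ≤ p.1})) x
      = ∫⁻ x, ∫⁻ u in Set.Ici (0:ℝ), g1 x * g2 (x - u) := by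
    refine lintegral_congr fun x => ?_
    simp only [Pi.mul_apply, hinner x]
    exact (lintegral_const_mul _ ((measurable_gaussianPDF _ _).comp
      (measurable_const.sub measurable_id))).symm
  rw [step]
  rw [lintegral_lintegral_swap]
  swap
  · apply Measurable.aemeasurable
    exact ((measurable_gaussianPDF _ _).comp measurable_fst).mul
      ((measurable_gaussianPDF _ _).comp (measurable_fst.sub measurable_snd))
  have hOuter : ∀ u : ℝ, (∫⁻ x, g1 x * g2 (x - u))
      = gaussianPDF (m1 - m2) (.mk (v1 + v2) (by positivity)) u := by
    intro u
    have hbd : ∀ x, ‖gaussianPDFReal m1 (.mk v1 h1.le) x‖ ≤ (Real.sqrt (2 * Real.pi * v1))⁻¹ := by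
      intro x
      rw [Real.norm_eq_abs, abs_of_nonneg (gaussianPDFReal_nonneg _ _ _), gaussianPDFReal]
      apply mul_le_of_le_one_right (by positivity)
      apply Real.exp_le_one_iff.2
      exact div_nonpos_of_nonpos_of_nonneg (neg_nonpos.2 (sq_nonneg _)) (by positivity)
    have hintg : Integrable (fun x => gaussianPDFReal m1 (.mk v1 h1.le) x *
        gaussianPDFReal m2 (.mk v2 h2.le) (x - u)) := by
      simp only [gaussianPDFReal_sub]
      exact (integrable_gaussianPDFReal (m2 + u) (.mk v2 h2.le)).bdd_mul
        (stronglyMeasurable_gaussianPDFReal _ _).aestronglyMeasurable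
        (ae_of_all _ hbd)
    have hnn : 0 ≤ᵐ[volume] fun x => gaussianPDFReal m1 (.mk v1 h1.le) x *
        gaussianPDFReal m2 (.mk v2 h2.le) (x - u) :=
      ae_of_all _ fun x => mul_nonneg (gaussianPDFReal_nonneg _ _ _) (gaussianPDFReal_nonneg _ _ _)
    calc (∫⁻ x, g1 x * g2 (x - u))
        = ∫⁻ x, ENNReal.ofReal (gaussianPDFReal m1 (.mk v1 h1.le) x *
            gaussianPDFReal m2 (.mk v2 h2.le) (x - u)) := by
          refine lintegral_congr fun x => ?_
          rw [hg1, hg2, gaussianPDF, gaussianPDF,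
            ENNReal.ofReal_mul (gaussianPDFReal_nonneg _ _ _)]
      _ = ENNReal.ofReal (∫ x, gaussianPDFReal m1 (.mk v1 h1.le) x *
            gaussianPDFReal m2 (.mk v2 h2.le) (x - u)) :=
          (ofReal_integral_eq_lintegral_ofReal hintg hnn).symm
      _ = gaussianPDF (m1 - m2) (.mk (v1 + v2) (by positivity)) u := by
          rw [gaussian_conv_pdf m1 m2 u h1 h2]; rfl
  rw [setLIntegral_congr_fun measurableSet_Ici (fun u _ => hOuter u),
    show {x : ℝ | 0 ≤ x} = Set.Ici (0:ℝ) from rfl, withDensity_apply _ measurableSet_Ici]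

theorem two_arm_gaussian_overlap_lower
    {Ω : Type*} [MeasurableSpace Ω] (μ : Measure Ω) [IsProbabilityMeasure μ]
    (θi θj : Ω → ℝ) (μi μj σi σj : ℝ) (hσ : 0 < σi ^ 2 + σj ^ 2)
    (hθi : Measure.map θi μ = gaussianReal μi (⟨σi ^ 2, sq_nonneg σi⟩ : NNReal))
    (hθj : Measure.map θj μ = gaussianReal μj (⟨σj ^ 2, sq_nonneg σj⟩ : NNReal))
    (hindep : IndepFun θi θj μ) (hμ : μi ≤ μj) :
    ENNReal.ofReal ((1 / Real.sqrt (2 * Real.pi)) *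
        Real.exp (-(μj - μi + Real.sqrt (σi ^ 2 + σj ^ 2)) ^ 2 / (2 * (σi ^ 2 + σj ^ 2))))
      ≤ μ {ω | θj ω ≤ θi ω} := by
  have hai : AEMeasurable θi μ := aemeasurable_of_map_neZero (by
    rw [hθi]; exact ⟨@IsProbabilityMeasure.ne_zero _ _ _ (instIsProbabilityMeasureGaussianReal _ _)⟩)
  have haj : AEMeasurable θj μ := aemeasurable_of_map_neZero (by
    rw [hθj]; exact ⟨@IsProbabilityMeasure.ne_zero _ _ _ (instIsProbabilityMeasureGaussianReal _ _)⟩)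
  have hS : MeasurableSet {p : ℝ × ℝ | p.2 ≤ p.1} :=
    measurableSet_le measurable_snd measurable_fst
  have hmap : μ {ω | θj ω ≤ θi ω}
      = ((gaussianReal μi (⟨σi ^ 2, sq_nonneg σi⟩ : NNReal)).prod
          (gaussianReal μj (⟨σj ^ 2, sq_nonneg σj⟩ : NNReal))) {p : ℝ × ℝ | p.2 ≤ p.1} := by
    rw [← hθi, ← hθj, ← (indepFun_iff_map_prod_eq_prod_map_map hai haj).1 hindep,
      Measure.map_apply_of_aemeasurable (hai.prodMk haj) hS]
    rfl
  rw [hmap]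
  rcases eq_or_lt_of_le (sq_nonneg σi) with hvi | hvi
  · -- σi ^ 2 = 0
    have hvj : 0 < σj ^ 2 := by nlinarith
    have hzi : (0 : NNReal) = ⟨σi ^ 2, sq_nonneg σi⟩ := by ext; exact hvi
    haveI : SFinite (gaussianReal μj ⟨σj ^ 2, sq_nonneg σj⟩) :=
      inferInstanceAs (SFinite (gaussianReal μj (NNReal.mk (σj ^ 2) (sq_nonneg σj))))
    rw [← hzi, gaussianReal_zero_var, Measure.dirac_prod,
      Measure.map_apply measurable_prodMk_left hS]
    have hpre : (Prod.mk μi ⁻¹' {p : ℝ × ℝ | p.2 ≤ p.1}) = {y : ℝ | y ≤ μi} := rfl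
    rw [hpre]
    have h2 := gaussian_lowtail_lb μj μi (σj ^ 2) hvj hμ
    rw [show (σi ^ 2 + σj ^ 2) = σj ^ 2 by rw [← hvi]; ring]
    exact h2
  rcases eq_or_lt_of_le (sq_nonneg σj) with hvj | hvj
  · -- σj ^ 2 = 0
    have hzj : (0 : NNReal) = ⟨σj ^ 2, sq_nonneg σj⟩ := by ext; exact hvj
    haveI : SFinite (gaussianReal μi ⟨σi ^ 2, sq_nonneg σi⟩) :=
      inferInstanceAs (SFinite (gaussianReal μi (NNReal.mk (σi ^ 2) (sq_nonneg σi))))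
    rw [← hzj, gaussianReal_zero_var, Measure.prod_dirac,
      Measure.map_apply (by fun_prop) hS]
    have hpre : ((fun x : ℝ => (x, μj)) ⁻¹' {p : ℝ × ℝ | p.2 ≤ p.1}) = {x : ℝ | μj ≤ x} := rfl
    rw [hpre]
    have h2 := gaussian_tail_lb μi μj (σi ^ 2) hvi hμ
    rw [show (σi ^ 2 + σj ^ 2) = σi ^ 2 by rw [← hvj]; ring]
    exact h2
  · -- both positive
    refine le_of_le_of_eq ?_ (prod_gaussian_apply μi μj hvi hvj).symm
    have h2 := gaussian_tail_lb (μi - μj) 0 (σi ^ 2 + σj ^ 2) (by positivity) (by linarith)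
    rw [show (0 : ℝ) - (μi - μj) = μj - μi by ring] at h2
    exact h2
end

section
/- Beta-Binomial identity: for positive integers a, b and y ∈ [0,1], the CDF of a Beta(a,b) random variable at y equals 1 minus the CDF of a Binomial(a+b-1, y) random variable at a-1; equivalently, P(X ≥ x) = P(B_{a+b-1, x} ≤ a-1) where X ~ Beta(a,b) and B_{n,p} ~ Binomial(n,p). -/
open MeasureTheory Real

noncomputable def bbH (n : ℕ) (x : ℝ) (k : ℕ) : ℝ :=
  if k = 0 then 0 else
    (n.choose (k-1) : ℝ) * ((n - k + 1 : ℕ) : ℝ) * x^(k-1) * (1-x)^(n-k)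

lemma bb_hasDerivAt_sum (n a : ℕ) (han : a ≤ n) (x : ℝ) :
    HasDerivAt (fun y : ℝ => ∑ k ∈ Finset.range a, (n.choose k : ℝ) * y ^ k * (1 - y) ^ (n - k))
      (- bbH n x a) x := by
  have key : ∀ k ∈ Finset.range a, HasDerivAt
      (fun y : ℝ => (n.choose k : ℝ) * y ^ k * (1 - y) ^ (n - k))
      (bbH n x k - bbH n x (k+1)) x := by
    intro k hk
    simp only [Finset.mem_range] at hk
    have hkn : k < n := lt_of_lt_of_le hk han
    have h1 : HasDerivAt (fun y : ℝ => y ^ k) ((k:ℝ) * x ^ (k-1)) x := hasDerivAt_pow k x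
    have h2 : HasDerivAt (fun y : ℝ => (1 - y) ^ (n - k))
        (((n - k : ℕ):ℝ) * (1-x)^(n-k-1) * (-1)) x :=
      ((hasDerivAt_id x).const_sub 1).pow (n-k)
    have h3 := (h1.fun_mul h2).const_mul ((n.choose k : ℝ))
    have hfun : (fun y : ℝ => (n.choose k : ℝ) * y ^ k * (1 - y) ^ (n - k))
        = fun y : ℝ => (n.choose k : ℝ) * (y ^ k * (1 - y) ^ (n - k)) := by
      funext y; ring
    rw [hfun]
    refine h3.congr_deriv (Eq.symm ?_)
    rcases k with _ | j
    · simp only [bbH, if_pos rfl, if_neg one_ne_zero]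
      have h0 : n - 1 + 1 = n := by omega
      simp [h0]
    · simp only [bbH, if_neg (Nat.succ_ne_zero j), if_neg (Nat.succ_ne_zero (j+1))]
      have hc : (n.choose (j+1) : ℝ) * ((j:ℝ)+1) = (n.choose j : ℝ) * ((n - j : ℕ) : ℝ) := by
        exact_mod_cast congrArg (Nat.cast : ℕ → ℝ) (Nat.choose_succ_right_eq n j)
      have e1 : n - (j+1) + 1 = n - j := by omega
      have e2 : n - (j+1) = n - j - 1 := by omega
      have e3 : j + 1 - 1 = j := by omega
      have e4 : j + 1 + 1 - 1 = j + 1 := by omega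
      have e5 : n - (j+1+1) + 1 = n - (j+1) := by omega
      have e6 : n - (j+1+1) = n - j - 1 - 1 := by omega
      simp only [e1, e5, e6, e2, e3, e4]
      have c2 : ((n-j-1-1:ℕ):ℝ) = ((n-j-1:ℕ):ℝ) - 1 := by
        rw [Nat.cast_sub (by omega)]; norm_num
      have c1 : ((n-j-1:ℕ):ℝ) = ((n-j:ℕ):ℝ) - 1 := by
        rw [Nat.cast_sub (by omega : 1 ≤ n - j)]; norm_num
      push_cast
      simp only [c2, c1]
      linear_combination (-(x ^ j * (1 - x) ^ (n - j - 1))) * hc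
  have h := HasDerivAt.fun_sum key
  rw [Finset.sum_range_sub'] at h
  simpa [bbH] using h

noncomputable def betaMeasure (a b : ℕ) : Measure ℝ :=
  (volume.restrict (Set.Icc (0 : ℝ) 1)).withDensity fun x =>
    ENNReal.ofReal (((a + b - 1).factorial : ℝ) / ((a - 1).factorial * (b - 1).factorial)
      * x ^ (a - 1) * (1 - x) ^ (b - 1))

theorem beta_binomial_identity (a b : ℕ) (ha : 1 ≤ a) (hb : 1 ≤ b)
    (x : ℝ) (hx0 : 0 ≤ x) (hx1 : x ≤ 1) :
    betaMeasure a b (Set.Iic x)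
        = ENNReal.ofReal (1 - ∑ k ∈ Finset.range a,
            ((a + b - 1).choose k : ℝ) * x ^ k * (1 - x) ^ (a + b - 1 - k)) ∧
      betaMeasure a b {t : ℝ | x ≤ t}
        = ENNReal.ofReal (∑ k ∈ Finset.range a,
            ((a + b - 1).choose k : ℝ) * x ^ k * (1 - x) ^ (a + b - 1 - k)) := by
  set n := a + b - 1 with hn
  have hban : a ≤ n := by omega
  set D : ℝ := (n.factorial : ℝ) / ((a-1).factorial * (b-1).factorial) with hD
  set f : ℝ → ℝ := fun t => D * t ^ (a-1) * (1-t)^(b-1) with hf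
  set S : ℝ → ℝ := fun y => ∑ k ∈ Finset.range a, (n.choose k : ℝ) * y^k * (1-y)^(n-k) with hS
  -- D equals choose (a-1) * b
  have hDb : D = (n.choose (a-1) : ℝ) * b := by
    have h := Nat.choose_mul_factorial_mul_factorial (show a-1 ≤ n by omega)
    have hnab : n - (a-1) = b := by omega
    rw [hnab] at h
    have hbf : (b.factorial : ℝ) = b * (b-1).factorial := by
      rw [show b = (b-1)+1 by omega, Nat.factorial_succ]
      push_cast
      ring_nf
    have hfa : ((a-1).factorial : ℝ) ≠ 0 := Nat.cast_ne_zero.2 (Nat.factorial_ne_zero _)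
    have hfb : ((b-1).factorial : ℝ) ≠ 0 := Nat.cast_ne_zero.2 (Nat.factorial_ne_zero _)
    rw [hD]
    rw [div_eq_iff (by positivity)]
    have h' : ((n.choose (a-1) : ℝ)) * (a-1).factorial * b.factorial = n.factorial := by
      exact_mod_cast congrArg (Nat.cast : ℕ → ℝ) h
    rw [← h', hbf]
    ring
  -- derivative of the antiderivative
  have hderiv : ∀ y : ℝ, HasDerivAt (fun z => 1 - S z) (f y) y := by
    intro y
    have h := (bb_hasDerivAt_sum n a hban y).const_sub 1
    refine h.congr_deriv (Eq.symm ?_)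
    rw [neg_neg, bbH, if_neg (by omega : a ≠ 0)]
    have e1 : n - a + 1 = b := by omega
    have e2 : n - a = b - 1 := by omega
    rw [e1, e2, hf, hDb]
  have hfc : Continuous f := by
    rw [hf]; continuity
  have hint : ∀ u v : ℝ, ∫ t in u..v, f t = S u - S v := by
    intro u v
    rw [intervalIntegral.integral_eq_sub_of_hasDerivAt (fun t _ => hderiv t)
      (hfc.intervalIntegrable u v)]
    ring
  have hS0 : S 0 = 1 := by
    simp only [hS]
    rw [Finset.sum_eq_single 0]
    · simp
    · intro k _ hk
      simp [zero_pow hk]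
    · intro h; exact absurd (Finset.mem_range.2 (by omega)) h
  have hS1 : S 1 = 0 := by
    simp only [hS]
    apply Finset.sum_eq_zero
    intro k hk
    simp only [Finset.mem_range] at hk
    have : n - k ≠ 0 := by omega
    simp [zero_pow this]
  -- nonnegativity of f on [0,1]
  have hfnn : ∀ t ∈ Set.Icc (0:ℝ) 1, 0 ≤ f t := by
    intro t ht
    have hD0 : 0 ≤ D := by rw [hD]; positivity
    exact mul_nonneg (mul_nonneg hD0 (pow_nonneg ht.1 _)) (pow_nonneg (by linarith [ht.2]) _)
  have hmain : ∀ s : Set ℝ, MeasurableSet s → s ∩ Set.Icc 0 1 ⊆ Set.Icc 0 1 →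
      betaMeasure a b s = ∫⁻ t in s ∩ Set.Icc 0 1, ENNReal.ofReal (f t) := by
    intro s hs _
    rw [betaMeasure, withDensity_apply _ hs, Measure.restrict_restrict hs]
  have key : ∀ (u v : ℝ), u ≤ v → Set.Icc u v ⊆ Set.Icc 0 1 →
      (∫⁻ t in Set.Icc u v, ENNReal.ofReal (f t)) = ENNReal.ofReal (S u - S v) := by
    intro u v huv hsub
    rw [← ofReal_integral_eq_lintegral_ofReal (hfc.integrableOn_Icc)]
    · rw [MeasureTheory.integral_Icc_eq_integral_Ioc,
        ← intervalIntegral.integral_of_le huv, hint]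
    · filter_upwards [ae_restrict_mem measurableSet_Icc] with t ht
      exact hfnn t (hsub ht)
  constructor
  · have hs1 : Set.Iic x ∩ Set.Icc (0:ℝ) 1 = Set.Icc 0 x := by
      ext t
      simp only [Set.mem_inter_iff, Set.mem_Iic, Set.mem_Icc]
      constructor
      · rintro ⟨h1, h2, _⟩; exact ⟨h2, h1⟩
      · rintro ⟨h1, h2⟩; exact ⟨h2, h1, le_trans h2 hx1⟩
    rw [hmain _ measurableSet_Iic (by rw [hs1]; intro t ht; exact ⟨ht.1, le_trans ht.2 hx1⟩),
      hs1, key 0 x hx0 (fun t ht => ⟨ht.1, le_trans ht.2 hx1⟩), hS0]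
  · have hIci : {t : ℝ | x ≤ t} = Set.Ici x := rfl
    have hs2 : Set.Ici x ∩ Set.Icc (0:ℝ) 1 = Set.Icc x 1 := by
      ext t
      simp only [Set.mem_inter_iff, Set.mem_Ici, Set.mem_Icc]
      constructor
      · rintro ⟨h1, _, h3⟩; exact ⟨h1, h3⟩
      · rintro ⟨h1, h2⟩; exact ⟨h1, le_trans hx0 h1, h2⟩
    rw [hIci, hmain _ measurableSet_Ici (by rw [hs2]; intro t ht; exact ⟨le_trans hx0 ht.1, ht.2⟩),
      hs2, key x 1 hx1 (fun t ht => ⟨le_trans hx0 ht.1, ht.2⟩), hS1]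
    congr 1
    simp only [hS]
    ring
end

section
/- Martingale deviation bound for selection probabilities: let (F_n) be a filtration, I_n an F_n-measurable random variable with values in a finite set A, ψ_{n,i} = P(I_n = i | F_{n-1}), T_{n,i} = Σ_{ℓ<n} 1{I_ℓ = i}, Ψ_{n,i} = Σ_{ℓ≤n} ψ_{ℓ,i}. Then D_n = T_{n+1,i} - Ψ_{n,i} is a martingale with increments bounded in [-1,1] (hence 1-sub-Gaussian), and for every δ ∈ (0,1), with probability at least 1 - δ, for all n: |T_{n+1,i} - Ψ_{n,i}| ≤ sqrt(2(1+n) log(√(1+n)/δ)). -/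
open MeasureTheory ProbabilityTheory Real

private lemma aux_chord (x s d : ℝ) (hs : 0 < s) (h1 : -1 ≤ d) (h2 : d ≤ 1) :
    Real.exp ((x + d) ^ 2 / (2 * s)) ≤
      (1 - d) / 2 * Real.exp ((x - 1) ^ 2 / (2 * s)) +
      (1 + d) / 2 * Real.exp ((x + 1) ^ 2 / (2 * s)) := by
  have ha : (0:ℝ) ≤ (1 - d) / 2 := by linarith
  have hb : (0:ℝ) ≤ (1 + d) / 2 := by linarith
  have hab : (1 - d) / 2 + (1 + d) / 2 = 1 := by ring
  have hq : (x + d) ^ 2 / (2 * s) ≤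
      (1 - d) / 2 * ((x - 1) ^ 2 / (2 * s)) + (1 + d) / 2 * ((x + 1) ^ 2 / (2 * s)) := by
    have heq : (1 - d) / 2 * ((x - 1) ^ 2 / (2 * s)) + (1 + d) / 2 * ((x + 1) ^ 2 / (2 * s))
        = ((1 - d) / 2 * (x - 1) ^ 2 + (1 + d) / 2 * (x + 1) ^ 2) / (2 * s) := by ring
    rw [heq]
    apply div_le_div_of_nonneg_right ?_ (by linarith : (0:ℝ) ≤ 2 * s) |>.trans_eq rfl
    nlinarith [sq_nonneg d]
  calc Real.exp ((x + d) ^ 2 / (2 * s))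
      ≤ Real.exp ((1 - d) / 2 * ((x - 1) ^ 2 / (2 * s)) + (1 + d) / 2 * ((x + 1) ^ 2 / (2 * s))) :=
        Real.exp_le_exp.2 hq
    _ ≤ (1 - d) / 2 * Real.exp ((x - 1) ^ 2 / (2 * s)) + (1 + d) / 2 * Real.exp ((x + 1) ^ 2 / (2 * s)) := by
        have := convexOn_exp.2 (Set.mem_univ ((x - 1) ^ 2 / (2 * s)))
          (Set.mem_univ ((x + 1) ^ 2 / (2 * s))) ha hb hab
        simpa [smul_eq_mul] using this

private lemma aux_key (x s : ℝ) (hs : 2 ≤ s) :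
    (Real.exp ((x - 1) ^ 2 / (2 * s)) + Real.exp ((x + 1) ^ 2 / (2 * s))) / (2 * Real.sqrt s)
      ≤ Real.exp (x ^ 2 / (2 * (s - 1))) / Real.sqrt (s - 1) := by
  have hs0 : (0:ℝ) < s := by linarith
  have hs1 : (0:ℝ) < s - 1 := by linarith
  have hsne : s ≠ 0 := ne_of_gt hs0
  have hsqs : (0:ℝ) < Real.sqrt s := Real.sqrt_pos.2 hs0
  have hsqs1 : (0:ℝ) < Real.sqrt (s - 1) := Real.sqrt_pos.2 hs1
  have e1 : (x - 1) ^ 2 / (2 * s) = (x ^ 2 + 1) / (2 * s) - x / s := by field_simp; ring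
  have e2 : (x + 1) ^ 2 / (2 * s) = (x ^ 2 + 1) / (2 * s) + x / s := by field_simp; ring
  have hsum : Real.exp ((x - 1) ^ 2 / (2 * s)) + Real.exp ((x + 1) ^ 2 / (2 * s))
      = Real.exp ((x ^ 2 + 1) / (2 * s)) * (2 * Real.cosh (x / s)) := by
    rw [e1, e2, Real.cosh_eq, Real.exp_sub, Real.exp_add, Real.exp_neg]
    field_simp; ring
  rw [hsum]
  have hcosh : Real.cosh (x / s) ≤ Real.exp (x ^ 2 / (2 * s ^ 2)) := by
    have h := Real.cosh_le_exp_half_sq (x / s)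
    have h' : (x / s) ^ 2 / 2 = x ^ 2 / (2 * s ^ 2) := by rw [div_pow]; ring
    rwa [h'] at h
  have step1 : Real.exp ((x ^ 2 + 1) / (2 * s)) * (2 * Real.cosh (x / s)) / (2 * Real.sqrt s)
      ≤ Real.exp ((x ^ 2 + 1) / (2 * s) + x ^ 2 / (2 * s ^ 2)) / Real.sqrt s := by
    rw [Real.exp_add]
    have heq : Real.exp ((x ^ 2 + 1) / (2 * s)) * (2 * Real.cosh (x / s)) / (2 * Real.sqrt s)
        = Real.exp ((x ^ 2 + 1) / (2 * s)) * Real.cosh (x / s) / Real.sqrt s := by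
      field_simp
    rw [heq]
    exact div_le_div_of_nonneg_right (mul_le_mul_of_nonneg_left hcosh (Real.exp_pos _).le) hsqs.le
      |>.trans_eq rfl
  have hexpo : (x ^ 2 + 1) / (2 * s) + x ^ 2 / (2 * s ^ 2) ≤ x ^ 2 / (2 * (s - 1)) + 1 / (2 * s) := by
    have hkey : x ^ 2 / (2 * (s - 1)) + 1 / (2 * s) - ((x ^ 2 + 1) / (2 * s) + x ^ 2 / (2 * s ^ 2))
        = x ^ 2 / (2 * s ^ 2 * (s - 1)) := by field_simp; ring
    nlinarith [div_nonneg (sq_nonneg x) (by positivity : (0:ℝ) ≤ 2 * s ^ 2 * (s - 1))]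
  have step3 : Real.sqrt (s - 1) * Real.exp (1 / (2 * s)) ≤ Real.sqrt s := by
    have hA : (0:ℝ) ≤ Real.sqrt (s - 1) * Real.exp (1 / (2 * s)) := by positivity
    rw [Real.le_sqrt hA hs0.le, mul_pow, Real.sq_sqrt hs1.le]
    have hsq : Real.exp (1 / (2 * s)) ^ 2 = Real.exp (1 / s) := by
      rw [sq, ← Real.exp_add]
      congr 1; field_simp; norm_num
    rw [hsq]
    have h1 : 1 - 1 / s ≤ Real.exp (-(1 / s)) := by
      have := Real.add_one_le_exp (-(1 / s)); linarith
    have h2 : Real.exp (1 / s) * Real.exp (-(1 / s)) = 1 := by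
      rw [← Real.exp_add]; simp
    have hepos := Real.exp_pos (1 / s)
    have h3 : (1 - 1 / s) * Real.exp (1 / s) ≤ 1 := by nlinarith
    have h4 : s * (1 / s) = 1 := by field_simp
    nlinarith
  calc Real.exp ((x ^ 2 + 1) / (2 * s)) * (2 * Real.cosh (x / s)) / (2 * Real.sqrt s)
      ≤ Real.exp ((x ^ 2 + 1) / (2 * s) + x ^ 2 / (2 * s ^ 2)) / Real.sqrt s := step1
    _ ≤ Real.exp (x ^ 2 / (2 * (s - 1)) + 1 / (2 * s)) / Real.sqrt s := by
        exact div_le_div_of_nonneg_right (Real.exp_le_exp.2 hexpo) hsqs.le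
    _ ≤ Real.exp (x ^ 2 / (2 * (s - 1))) / Real.sqrt (s - 1) := by
        rw [Real.exp_add, div_le_div_iff₀ hsqs hsqs1]
        calc Real.exp (x ^ 2 / (2 * (s - 1))) * Real.exp (1 / (2 * s)) * Real.sqrt (s - 1)
            = Real.exp (x ^ 2 / (2 * (s - 1))) * (Real.sqrt (s - 1) * Real.exp (1 / (2 * s))) := by
              ring
          _ ≤ Real.exp (x ^ 2 / (2 * (s - 1))) * Real.sqrt s :=
              mul_le_mul_of_nonneg_left step3 (Real.exp_pos _).le

private lemma aux_ville {Ω : Type*} {m0 : MeasurableSpace Ω} (μ : Measure Ω)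
    [IsProbabilityMeasure μ]
    (ℱ : Filtration ℕ m0) (M : ℕ → Ω → ℝ) (hM : Supermartingale M ℱ μ)
    (hnn : ∀ n ω, 0 ≤ M n ω) (hM0 : ∀ ω, M 0 ω = 1) {ε : ℝ} (hε : 0 < ε) :
    μ {ω | ∃ n, ε ≤ M n ω} ≤ ENNReal.ofReal (1 / ε) := by
  have hSub : Submartingale (-M) ℱ μ := hM.neg
  have hMeasSet : ∀ k : ℕ, MeasurableSet {ω | ε ≤ M k ω} := fun k =>
    measurableSet_le measurable_const ((hM.stronglyMeasurable k).measurable.mono (ℱ.le k) le_rfl)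
  set S : ℕ → Set Ω := fun N => {ω | ∃ k ≤ N, ε ≤ M k ω} with hS
  have hSmeas : ∀ N, MeasurableSet (S N) := by
    intro N
    have : S N = ⋃ k ∈ Finset.range (N + 1), {ω | ε ≤ M k ω} := by
      ext ω; simp [hS, Nat.lt_succ_iff]
    rw [this]
    exact MeasurableSet.biUnion (Finset.range (N + 1)).countable_toSet fun k _ => hMeasSet k
  have hkey : ∀ N, μ (S N) ≤ ENNReal.ofReal (1 / ε) := by
    intro N
    set τ : Ω → WithTop ℕ := fun ω => (hittingBtwn M {y : ℝ | ε ≤ y} 0 N ω : ℕ) with hτdef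
    have hτ : IsStoppingTime ℱ τ :=
      hM.stronglyAdapted.adapted.isStoppingTime_hittingBtwn measurableSet_Ici
    have hτle : ∀ ω, τ ω ≤ N := fun ω => WithTop.coe_le_coe.2 (hittingBtwn_le ω)
    have hint : Integrable (stoppedValue M τ) μ :=
      integrable_stoppedValue ℕ hτ hM.integrable hτle
    have hmean : ∫ ω, stoppedValue M τ ω ∂μ ≤ 1 := by
      have h := hSub.expected_stoppedValue_mono (isStoppingTime_const ℱ 0) hτ
        (fun ω => WithTop.coe_le_coe.2 (Nat.zero_le _)) hτle
      have hneg1 : stoppedValue (-M) (fun _ => WithTop.some (0:ℕ)) = fun ω => -M 0 ω := by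
        funext ω; simp [stoppedValue]
      have hneg2 : stoppedValue (-M) τ = fun ω => -(stoppedValue M τ ω) := by
        funext ω; simp [stoppedValue]
      rw [hneg1, hneg2, integral_neg, integral_neg] at h
      have hint0 : ∫ ω, M 0 ω ∂μ = 1 := by
        have h0 : (fun ω => M 0 ω) = fun _ => (1:ℝ) := funext hM0
        rw [h0, integral_const]; simp
      simp only [neg_le_neg_iff] at h
      linarith [h]
    have hpt : ∀ ω ∈ S N, ε ≤ stoppedValue M τ ω := by
      intro ω hω
      obtain ⟨k, hk, hεk⟩ := hω
      exact stoppedValue_hittingBtwn_mem ⟨k, ⟨Nat.zero_le _, hk⟩, hεk⟩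
    have h1 : ε * (μ (S N)).toReal ≤ ∫ ω in S N, stoppedValue M τ ω ∂μ :=
      setIntegral_ge_of_const_le_real (hSmeas N) (measure_ne_top μ _) hpt hint.integrableOn
    have h2 : ∫ ω in S N, stoppedValue M τ ω ∂μ ≤ ∫ ω, stoppedValue M τ ω ∂μ :=
      setIntegral_le_integral hint (Filter.Eventually.of_forall fun ω => hnn _ ω)
    have h3 : (μ (S N)).toReal ≤ 1 / ε := by
      rw [le_div_iff₀ hε]
      calc (μ (S N)).toReal * ε = ε * (μ (S N)).toReal := mul_comm _ _
        _ ≤ 1 := le_trans h1 (le_trans h2 hmean)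
    calc μ (S N) = ENNReal.ofReal ((μ (S N)).toReal) :=
          (ENNReal.ofReal_toReal (measure_ne_top μ _)).symm
      _ ≤ ENNReal.ofReal (1 / ε) := ENNReal.ofReal_le_ofReal h3
  have hunion : {ω | ∃ n, ε ≤ M n ω} = ⋃ N, S N := by
    ext ω; simp only [Set.mem_setOf_eq, Set.mem_iUnion, hS]
    exact ⟨fun ⟨n, hn⟩ => ⟨n, n, le_rfl, hn⟩, fun ⟨N, k, _, hk⟩ => ⟨k, hk⟩⟩
  rw [hunion]
  have hmono : Monotone S := fun N N' hNN' ω ⟨k, hk, hεk⟩ => ⟨k, le_trans hk hNN', hεk⟩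
  rw [hmono.measure_iUnion]
  exact iSup_le hkey

theorem selection_probability_martingale_deviation
    {Ω : Type*} {m0 : MeasurableSpace Ω} (μ : Measure Ω) [IsProbabilityMeasure μ]
    {A : Type*} [MeasurableSpace A] [MeasurableSingletonClass A] [Fintype A] [DecidableEq A]
    (ℱ : Filtration ℕ m0) (I : ℕ → Ω → A)
    (hI : ∀ n : ℕ, Measurable[ℱ n] (I n)) (i : A)
    (ψ : ℕ → Ω → ℝ)
    (hψ : ∀ n : ℕ, ψ n = μ[(fun ω => if I (n + 1) ω = i then (1 : ℝ) else 0) | ℱ n])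
    (D : ℕ → Ω → ℝ)
    (hD : ∀ n ω, D n ω =
      ∑ ℓ ∈ Finset.range n, ((if I (ℓ + 1) ω = i then (1 : ℝ) else 0) - ψ ℓ ω)) :
    Martingale D ℱ μ ∧
    (∀ n : ℕ, ∀ᵐ ω ∂μ, |D (n + 1) ω - D n ω| ≤ 1) ∧
    ∀ δ : ℝ, 0 < δ → δ < 1 →
      ENNReal.ofReal (1 - δ) ≤
        μ {ω | ∀ n : ℕ, |D n ω| ≤
          Real.sqrt (2 * (1 + n) * Real.log (Real.sqrt (1 + n) / δ))} := by
  set χ : ℕ → Ω → ℝ := fun n ω => if I (n + 1) ω = i then (1 : ℝ) else 0 with hχdef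
  have hχm : ∀ n, StronglyMeasurable[ℱ (n + 1)] (χ n) := fun n =>
    (Measurable.ite (hI (n + 1) (measurableSet_singleton i)) measurable_const
      measurable_const).stronglyMeasurable
  have hχbd : ∀ n ω, 0 ≤ χ n ω ∧ χ n ω ≤ 1 := by
    intro n ω; by_cases h : I (n + 1) ω = i <;> simp [hχdef, h]
  have hχint : ∀ n, Integrable (χ n) μ := by
    intro n
    refine Integrable.mono' (integrable_const (1 : ℝ))
      (((hχm n).mono (ℱ.le (n + 1))).aestronglyMeasurable) ?_
    filter_upwards with ω
    rw [Real.norm_eq_abs, abs_le]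
    exact ⟨by linarith [(hχbd n ω).1], (hχbd n ω).2⟩
  have hψm : ∀ n, StronglyMeasurable[ℱ n] (ψ n) := fun n => (hψ n) ▸ stronglyMeasurable_condExp
  have hψint : ∀ n, Integrable (ψ n) μ := fun n => (hψ n) ▸ integrable_condExp
  have hψ0 : ∀ n, 0 ≤ᵐ[μ] ψ n := fun n => (hψ n) ▸
    condExp_nonneg (Filter.Eventually.of_forall fun ω => (hχbd n ω).1)
  have hψ1 : ∀ n, ψ n ≤ᵐ[μ] fun _ => (1 : ℝ) := by
    intro n
    rw [hψ n]
    have h := condExp_mono (m := ℱ n) (hχint n) (integrable_const (1 : ℝ))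
      (Filter.Eventually.of_forall fun ω => (hχbd n ω).2)
    rwa [condExp_const (ℱ.le n)] at h
  have hincr : ∀ n, D (n + 1) = fun ω => D n ω + (χ n ω - ψ n ω) := by
    intro n; funext ω; rw [hD, hD, Finset.sum_range_succ]
  have hDm : ∀ n, StronglyMeasurable[ℱ n] (D n) := by
    intro n
    have hDeq : D n = fun ω => ∑ ℓ ∈ Finset.range n, (χ ℓ ω - ψ ℓ ω) := funext (hD n)
    rw [hDeq]
    refine Finset.stronglyMeasurable_fun_sum _ fun ℓ hℓ => ?_
    have hℓn : ℓ + 1 ≤ n := Finset.mem_range.1 hℓ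
    exact ((hχm ℓ).mono (ℱ.mono hℓn)).sub ((hψm ℓ).mono (ℱ.mono (le_trans (Nat.le_succ ℓ) hℓn)))
  have hdabs : ∀ n, ∀ᵐ ω ∂μ, |χ n ω - ψ n ω| ≤ 1 := by
    intro n
    filter_upwards [hψ0 n, hψ1 n] with ω h0 h1
    simp only [Pi.zero_apply] at h0
    rw [abs_le]
    exact ⟨by linarith [(hχbd n ω).1, (hχbd n ω).2], by linarith [(hχbd n ω).1, (hχbd n ω).2]⟩
  have hDabs : ∀ n, ∀ᵐ ω ∂μ, |D n ω| ≤ n := by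
    intro n
    have hall : ∀ᵐ ω ∂μ, ∀ ℓ, |χ ℓ ω - ψ ℓ ω| ≤ 1 := ae_all_iff.2 hdabs
    filter_upwards [hall] with ω hω
    rw [hD n ω]
    calc |∑ ℓ ∈ Finset.range n, (χ ℓ ω - ψ ℓ ω)| ≤ ∑ ℓ ∈ Finset.range n, |χ ℓ ω - ψ ℓ ω| :=
          Finset.abs_sum_le_sum_abs _ _
      _ ≤ ∑ _ℓ ∈ Finset.range n, (1 : ℝ) := Finset.sum_le_sum fun ℓ _ => hω ℓ
      _ = n := by simp
  have hDint : ∀ n, Integrable (D n) μ := by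
    intro n
    refine Integrable.mono' (integrable_const (n : ℝ))
      (((hDm n).mono (ℱ.le n)).aestronglyMeasurable) ?_
    filter_upwards [hDabs n] with ω hω
    rwa [Real.norm_eq_abs]
  -- martingale
  have hmart : Martingale D ℱ μ := by
    refine martingale_nat hDm hDint fun n => ?_
    have hrw : D (n + 1) = D n + (χ n - ψ n) := by
      rw [hincr n]; rfl
    rw [hrw]
    have h1 : μ[D n + (χ n - ψ n)|ℱ n] =ᵐ[μ] μ[D n|ℱ n] + μ[χ n - ψ n|ℱ n] :=
      condExp_add (hDint n) ((hχint n).sub (hψint n)) (ℱ n)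
    have h2 : μ[χ n - ψ n|ℱ n] =ᵐ[μ] μ[χ n|ℱ n] - μ[ψ n|ℱ n] := condExp_sub (hχint n) (hψint n) (ℱ n)
    have h3 : μ[D n|ℱ n] = D n := condExp_of_stronglyMeasurable (ℱ.le n) (hDm n) (hDint n)
    have h4 : μ[ψ n|ℱ n] = ψ n := condExp_of_stronglyMeasurable (ℱ.le n) (hψm n) (hψint n)
    have h5 : μ[χ n|ℱ n] = ψ n := (hψ n).symm
    filter_upwards [h1, h2] with ω hω1 hω2
    rw [hω1]
    simp only [Pi.add_apply, Pi.sub_apply] at hω2 ⊢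
    rw [hω2, h3, h4, h5]
    ring
  -- Part 2
  have hpart2 : ∀ n : ℕ, ∀ᵐ ω ∂μ, |D (n + 1) ω - D n ω| ≤ 1 := by
    intro n
    filter_upwards [hdabs n] with ω hω
    have hrw : D (n + 1) ω = D n ω + (χ n ω - ψ n ω) := congrFun (hincr n) ω
    rw [hrw, add_sub_cancel_left]
    exact hω
  refine And.intro hmart (And.intro hpart2 ?_)
  intro δ hδ0 hδ1
  -- the mixture supermartingale
  set M : ℕ → Ω → ℝ := fun n ω =>
    Real.exp (D n ω ^ 2 / (2 * (1 + (n:ℝ)))) / Real.sqrt (1 + (n:ℝ)) with hMdef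
  have hMnn : ∀ n ω, 0 ≤ M n ω := fun n ω => div_nonneg (Real.exp_pos _).le (Real.sqrt_nonneg _)
  have hM0 : ∀ ω, M 0 ω = 1 := by
    intro ω
    have h0 : D 0 ω = 0 := by rw [hD]; simp
    simp [hMdef, h0]
  have hMm : ∀ n, StronglyMeasurable[ℱ n] (M n) := by
    intro n
    have h1 : StronglyMeasurable[ℱ n] fun ω => D n ω ^ 2 := by
      simpa [sq, Pi.mul_def] using (hDm n).mul (hDm n)
    have h2 : StronglyMeasurable[ℱ n] fun ω => D n ω ^ 2 / (2 * (1 + (n:ℝ))) := by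
      simpa [div_eq_mul_inv, Pi.mul_def] using h1.mul stronglyMeasurable_const
    have h3 : StronglyMeasurable[ℱ n] fun ω => Real.exp (D n ω ^ 2 / (2 * (1 + (n:ℝ)))) :=
      Real.continuous_exp.comp_stronglyMeasurable h2
    simpa [hMdef, div_eq_mul_inv, Pi.mul_def] using h3.mul stronglyMeasurable_const
  have hsq1 : ∀ n : ℕ, (1:ℝ) ≤ Real.sqrt (1 + (n:ℝ)) := by
    intro n
    have hn : (0:ℝ) ≤ (n:ℝ) := Nat.cast_nonneg n
    exact (Real.le_sqrt zero_le_one (by linarith)).2 (by rw [one_pow]; linarith)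
  have hMint : ∀ n, Integrable (M n) μ := by
    intro n
    refine Integrable.mono' (integrable_const (Real.exp ((n:ℝ) ^ 2)))
      (((hMm n).mono (ℱ.le n)).aestronglyMeasurable) ?_
    filter_upwards [hDabs n] with ω hω
    have hn : (0:ℝ) ≤ (n:ℝ) := Nat.cast_nonneg n
    have h1 : D n ω ^ 2 ≤ (n:ℝ) ^ 2 := by
      have := abs_le.1 hω
      nlinarith [this.1, this.2]
    have h2 : D n ω ^ 2 / (2 * (1 + (n:ℝ))) ≤ (n:ℝ) ^ 2 :=
      le_trans (div_le_self (sq_nonneg _) (by linarith)) h1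
    rw [Real.norm_eq_abs, abs_of_nonneg (hMnn n ω)]
    calc M n ω ≤ Real.exp (D n ω ^ 2 / (2 * (1 + (n:ℝ)))) / 1 := by
          simp only [hMdef]
          gcongr
          exact hsq1 n
      _ = Real.exp (D n ω ^ 2 / (2 * (1 + (n:ℝ)))) := div_one _
      _ ≤ Real.exp ((n:ℝ) ^ 2) := Real.exp_le_exp.2 h2
  -- the supermartingale property
  have hSuper : Supermartingale M ℱ μ := by
    refine supermartingale_nat hMm hMint fun n => ?_
    set s : ℝ := 1 + ((n:ℝ) + 1) with hs
    have hn0 : (0:ℝ) ≤ (n:ℝ) := Nat.cast_nonneg n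
    have hs2 : (2:ℝ) ≤ s := by rw [hs]; linarith
    have hs0 : (0:ℝ) < s := by linarith
    have hsq0 : (0:ℝ) < Real.sqrt s := Real.sqrt_pos.2 hs0
    set g : Ω → ℝ := fun ω =>
      (Real.exp ((D n ω - 1) ^ 2 / (2 * s)) + Real.exp ((D n ω + 1) ^ 2 / (2 * s)))
        / (2 * Real.sqrt s) with hgdef
    set h : Ω → ℝ := fun ω =>
      (Real.exp ((D n ω + 1) ^ 2 / (2 * s)) - Real.exp ((D n ω - 1) ^ 2 / (2 * s)))
        / (2 * Real.sqrt s) with hhdef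
    set dd : Ω → ℝ := fun ω => χ n ω - ψ n ω with hdddef
    have hsme : ∀ c : ℝ, StronglyMeasurable[ℱ n] fun ω => Real.exp ((D n ω + c) ^ 2 / (2 * s)) := by
      intro c
      have h1 : StronglyMeasurable[ℱ n] fun ω => D n ω + c := (hDm n).add stronglyMeasurable_const
      have h2 : StronglyMeasurable[ℱ n] fun ω => (D n ω + c) ^ 2 := by simpa [sq, Pi.mul_def] using h1.mul h1
      have h3 : StronglyMeasurable[ℱ n] fun ω => (D n ω + c) ^ 2 / (2 * s) := by
        simpa [div_eq_mul_inv, Pi.mul_def] using h2.mul stronglyMeasurable_const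
      exact Real.continuous_exp.comp_stronglyMeasurable h3
    have hsme' : StronglyMeasurable[ℱ n] fun ω => Real.exp ((D n ω - 1) ^ 2 / (2 * s)) := by
      simpa [sub_eq_add_neg] using hsme (-1)
    have hgm : StronglyMeasurable[ℱ n] g := by
      rw [hgdef]
      simpa [div_eq_mul_inv, Pi.mul_def, Pi.add_def] using (hsme'.add (hsme 1)).mul stronglyMeasurable_const
    have hhm : StronglyMeasurable[ℱ n] h := by
      rw [hhdef]
      simpa [div_eq_mul_inv, Pi.mul_def, Pi.sub_def] using ((hsme 1).sub hsme').mul stronglyMeasurable_const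
    have hddm : StronglyMeasurable[m0] dd :=
      ((hχm n).mono (ℱ.le (n + 1))).sub ((hψm n).mono (ℱ.le n))
    have hddint : Integrable dd μ := (hχint n).sub (hψint n)
    set C : ℝ := Real.exp (((n:ℝ) + 2) ^ 2) with hCdef
    have hC0 : (0:ℝ) < C := Real.exp_pos _
    have hsqs1 : (1:ℝ) ≤ Real.sqrt s := by
      rw [hs]
      have := hsq1 (n + 1)
      push_cast at this ⊢
      convert this using 3 <;> ring
    have hexpbd : ∀ᵐ ω ∂μ, Real.exp ((D n ω - 1) ^ 2 / (2 * s)) ≤ C ∧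
        Real.exp ((D n ω + 1) ^ 2 / (2 * s)) ≤ C := by
      filter_upwards [hDabs n] with ω hω
      have hωle := abs_le.1 hω
      have hb1 : (D n ω - 1) ^ 2 ≤ ((n:ℝ) + 2) ^ 2 := by nlinarith [hωle.1, hωle.2]
      have hb2 : (D n ω + 1) ^ 2 ≤ ((n:ℝ) + 2) ^ 2 := by nlinarith [hωle.1, hωle.2]
      constructor
      · exact Real.exp_le_exp.2 (le_trans (div_le_self (sq_nonneg _) (by linarith)) hb1)
      · exact Real.exp_le_exp.2 (le_trans (div_le_self (sq_nonneg _) (by linarith)) hb2)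
    have hgbd : ∀ᵐ ω ∂μ, ‖g ω‖ ≤ C := by
      filter_upwards [hexpbd] with ω hω
      rw [Real.norm_eq_abs, hgdef]
      have hpos : (0:ℝ) ≤ (Real.exp ((D n ω - 1) ^ 2 / (2 * s)) +
          Real.exp ((D n ω + 1) ^ 2 / (2 * s))) / (2 * Real.sqrt s) := by positivity
      rw [abs_of_nonneg hpos]
      calc (Real.exp ((D n ω - 1) ^ 2 / (2 * s)) + Real.exp ((D n ω + 1) ^ 2 / (2 * s)))
            / (2 * Real.sqrt s)
          ≤ (C + C) / (2 * 1) := by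
            gcongr
            all_goals first | exact hω.1 | exact hω.2 | linarith
        _ = C := by ring
    have hhbd : ∀ᵐ ω ∂μ, ‖h ω‖ ≤ C := by
      filter_upwards [hexpbd] with ω hω
      rw [Real.norm_eq_abs, hhdef]
      have h2s : (1:ℝ) ≤ 2 * Real.sqrt s := by linarith
      rw [abs_div, abs_of_nonneg (by linarith : (0:ℝ) ≤ 2 * Real.sqrt s)]
      have hnum : |Real.exp ((D n ω + 1) ^ 2 / (2 * s)) - Real.exp ((D n ω - 1) ^ 2 / (2 * s))| ≤ C := by
        rw [abs_sub_le_iff]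
        constructor
        · linarith [Real.exp_pos ((D n ω - 1) ^ 2 / (2 * s)), hω.2]
        · linarith [Real.exp_pos ((D n ω + 1) ^ 2 / (2 * s)), hω.1]
      exact le_trans (div_le_self (abs_nonneg _) h2s) hnum
    have hgint : Integrable g μ :=
      Integrable.mono' (integrable_const C) ((hgm.mono (ℱ.le n)).aestronglyMeasurable) hgbd
    have hhddint : Integrable (h * dd) μ := by
      refine Integrable.mono' (integrable_const C)
        (((hhm.mono (ℱ.le n)).mul hddm).aestronglyMeasurable) ?_
      filter_upwards [hhbd, hdabs n] with ω h1 h2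
      rw [Pi.mul_apply, Real.norm_eq_abs, abs_mul]
      calc |h ω| * |dd ω| ≤ C * 1 := by
            refine mul_le_mul ?_ h2 (abs_nonneg _) hC0.le
            rwa [Real.norm_eq_abs] at h1
        _ = C := mul_one C
    have hptwise : M (n + 1) ≤ᵐ[μ] g + h * dd := by
      filter_upwards [hψ0 n, hψ1 n] with ω h0 h1
      simp only [Pi.zero_apply] at h0
      have hd1 : -1 ≤ dd ω := by
        simp only [hdddef]; linarith [(hχbd n ω).1]
      have hd2 : dd ω ≤ 1 := by
        simp only [hdddef]; linarith [(hχbd n ω).2]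
      have hDrw : D (n + 1) ω = D n ω + dd ω := congrFun (hincr n) ω
      have hcast : 1 + ((n + 1 : ℕ):ℝ) = s := by push_cast [hs]; ring
      have hM1 : M (n + 1) ω = Real.exp ((D n ω + dd ω) ^ 2 / (2 * s)) / Real.sqrt s := by
        simp only [hMdef]
        rw [hDrw, hcast]
      have hchord := aux_chord (D n ω) s (dd ω) hs0 hd1 hd2
      have hstep : M (n + 1) ω ≤
          ((1 - dd ω) / 2 * Real.exp ((D n ω - 1) ^ 2 / (2 * s)) +
           (1 + dd ω) / 2 * Real.exp ((D n ω + 1) ^ 2 / (2 * s))) / Real.sqrt s := by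
        rw [hM1]
        exact div_le_div_of_nonneg_right hchord hsq0.le |>.trans_eq rfl
      refine le_trans hstep (le_of_eq ?_)
      show _ = g ω + h ω * dd ω
      rw [hgdef, hhdef]
      have hsqne : Real.sqrt s ≠ 0 := ne_of_gt hsq0
      field_simp
      ring
    -- conditional expectation chain
    have hRint : Integrable (g + h * dd) μ := hgint.add hhddint
    have c1 : μ[M (n + 1)|ℱ n] ≤ᵐ[μ] μ[g + h * dd|ℱ n] :=
      condExp_mono (hMint (n + 1)) hRint hptwise
    have c2 : μ[g + h * dd|ℱ n] =ᵐ[μ] μ[g|ℱ n] + μ[h * dd|ℱ n] := condExp_add hgint hhddint (ℱ n)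
    have c3 : μ[g|ℱ n] = g := condExp_of_stronglyMeasurable (ℱ.le n) hgm hgint
    have c4 : μ[h * dd|ℱ n] =ᵐ[μ] h * μ[dd|ℱ n] := condExp_mul_of_stronglyMeasurable_left hhm hhddint hddint
    have c5 : μ[dd|ℱ n] =ᵐ[μ] 0 := by
      have hsub : μ[χ n - ψ n|ℱ n] =ᵐ[μ] μ[χ n|ℱ n] - μ[ψ n|ℱ n] := condExp_sub (hχint n) (hψint n) (ℱ n)
      have h4 : μ[ψ n|ℱ n] = ψ n := condExp_of_stronglyMeasurable (ℱ.le n) (hψm n) (hψint n)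
      have h5 : μ[χ n|ℱ n] = ψ n := (hψ n).symm
      have hdd_eq : dd = χ n - ψ n := rfl
      rw [hdd_eq]
      filter_upwards [hsub] with ω hω
      rw [hω]
      simp [Pi.sub_apply, h4, h5]
    have c6 : ∀ ω, g ω ≤ M n ω := by
      intro ω
      have hkey := aux_key (D n ω) s hs2
      have hcast : s - 1 = 1 + (n:ℝ) := by rw [hs]; ring
      rw [hcast] at hkey
      simpa [hgdef, hMdef] using hkey
    calc μ[M (n + 1)|ℱ n] ≤ᵐ[μ] μ[g + h * dd|ℱ n] := c1
      _ =ᵐ[μ] g + h * μ[dd|ℱ n] := by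
          filter_upwards [c2, c4] with ω h2 h4
          rw [h2]
          simp only [Pi.add_apply, Pi.mul_apply] at h4 ⊢
          rw [h4, c3]
      _ =ᵐ[μ] g := by
          filter_upwards [c5] with ω h5
          simp only [Pi.add_apply, Pi.mul_apply, h5, Pi.zero_apply, mul_zero, add_zero]
      _ ≤ᵐ[μ] M n := Filter.Eventually.of_forall c6
  -- Ville's inequality
  have hville := aux_ville μ ℱ M hSuper hMnn hM0 (by positivity : (0:ℝ) < 1 / δ)
  rw [one_div_one_div] at hville
  -- from the bad event to the good event
  set G : Set Ω := {ω | ∀ n : ℕ, |D n ω| ≤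
      Real.sqrt (2 * (1 + n) * Real.log (Real.sqrt (1 + n) / δ))} with hGdef
  have hGm : MeasurableSet G := by
    have : G = ⋂ n : ℕ, {ω | |D n ω| ≤
        Real.sqrt (2 * (1 + n) * Real.log (Real.sqrt (1 + n) / δ))} := by
      ext ω; simp [hGdef]
    rw [this]
    exact MeasurableSet.iInter fun n =>
      measurableSet_le (((hDm n).mono (ℱ.le n)).measurable.abs) measurable_const
  have hsubset : Gᶜ ⊆ {ω | ∃ n, 1 / δ ≤ M n ω} := by
    intro ω hω
    simp only [hGdef, Set.mem_compl_iff, Set.mem_setOf_eq, not_forall] at hω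
    obtain ⟨n, hn⟩ := hω
    push_neg at hn
    refine ⟨n, ?_⟩
    have hn0 : (0:ℝ) ≤ (n:ℝ) := Nat.cast_nonneg n
    set t : ℝ := 1 + (n:ℝ) with htdef
    have ht0 : (0:ℝ) < t := by rw [htdef]; linarith
    have hsqt : (1:ℝ) ≤ Real.sqrt t := hsq1 n
    have hsqt0 : (0:ℝ) < Real.sqrt t := by linarith
    set L : ℝ := Real.log (Real.sqrt t / δ) with hLdef
    have hL : 0 < L := Real.log_pos ((one_lt_div hδ0).2 (lt_of_lt_of_le hδ1 hsqt))
    have harg : (0:ℝ) ≤ 2 * t * L := by positivity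
    have hlt : 2 * t * L < D n ω ^ 2 := by
      have h1 : Real.sqrt (2 * t * L) ^ 2 < |D n ω| ^ 2 :=
        pow_lt_pow_left₀ hn (Real.sqrt_nonneg _) two_ne_zero
      rw [Real.sq_sqrt harg, sq_abs] at h1
      exact h1
    have hL' : L < D n ω ^ 2 / (2 * t) := by
      rw [lt_div_iff₀ (by positivity : (0:ℝ) < 2 * t)]
      nlinarith
    have hexp : Real.sqrt t / δ < Real.exp (D n ω ^ 2 / (2 * t)) := by
      rw [← Real.exp_log (show (0:ℝ) < Real.sqrt t / δ by positivity)]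
      exact Real.exp_lt_exp.2 hL'
    have hMn : M n ω = Real.exp (D n ω ^ 2 / (2 * t)) / Real.sqrt t := rfl
    rw [hMn]
    have hdiv : (Real.sqrt t / δ) / Real.sqrt t = 1 / δ := by
      rw [div_right_comm, div_self (ne_of_gt hsqt0), one_div]
    calc (1:ℝ) / δ = (Real.sqrt t / δ) / Real.sqrt t := hdiv.symm
      _ ≤ Real.exp (D n ω ^ 2 / (2 * t)) / Real.sqrt t := by gcongr
  have hGc : μ Gᶜ ≤ ENNReal.ofReal δ := le_trans (measure_mono hsubset) hville
  have hfinal : ENNReal.ofReal (1 - δ) ≤ μ G := by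
    calc ENNReal.ofReal (1 - δ) = ENNReal.ofReal 1 - ENNReal.ofReal δ :=
          ENNReal.ofReal_sub 1 hδ0.le
      _ = 1 - ENNReal.ofReal δ := by rw [ENNReal.ofReal_one]
      _ ≤ 1 - μ Gᶜ := tsub_le_tsub_left hGc 1
      _ = μ G := by
          have := prob_compl_eq_one_sub (μ := μ) hGm.compl
          rw [compl_compl] at this
          rw [this]
  exact hfinal
end

section
/- Top-two probability lower bounds: let (a_i)_{i∈A} be nonnegative with Σ a_i = 1, |A| = K, a_i < 1 for all i, and β ∈ (0,1). Let i1 = argmax_i a_i and i2 = argmax_{i≠i1} a_i, and ψ_i = a_i(β + (1-β)Σ_{j≠i} a_j/(1-a_j)). Then ψ_{i1} ≥ β/K and ψ_{i2} ≥ (1-β)/K^2. -/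
open Finset

theorem ttts_top_two_selection_lower_bounds
    {A : Type*} [Fintype A] [DecidableEq A] (hA : 2 ≤ Fintype.card A)
    (a : A → ℝ) (β : ℝ) (ha0 : ∀ i, 0 ≤ a i) (ha1 : ∀ i, a i < 1)
    (hsum : ∑ i, a i = 1) (hβ0 : 0 < β) (hβ1 : β < 1)
    (i1 i2 : A) (hi1 : ∀ j, a j ≤ a i1) (hne : i2 ≠ i1)
    (hi2 : ∀ j, j ≠ i1 → a j ≤ a i2) :
    β / Fintype.card A
        ≤ a i1 * (β + (1 - β) * ∑ j ∈ Finset.univ.erase i1, a j / (1 - a j)) ∧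
    (1 - β) / (Fintype.card A : ℝ) ^ 2
        ≤ a i2 * (β + (1 - β) * ∑ j ∈ Finset.univ.erase i2, a j / (1 - a j)) := by
  set K : ℝ := (Fintype.card A : ℝ) with hK
  have hK2 : (2:ℝ) ≤ K := by rw [hK]; exact_mod_cast hA
  have hK0 : (0:ℝ) < K := by linarith
  -- max ≥ average
  have hmax : 1 / K ≤ a i1 := by
    have h : (1:ℝ) ≤ K * a i1 := by
      calc (1:ℝ) = ∑ i, a i := hsum.symm
        _ ≤ ∑ _i : A, a i1 := Finset.sum_le_sum fun j _ => hi1 j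
        _ = K * a i1 := by rw [Finset.sum_const, Finset.card_univ]; push_cast; ring
    rw [div_le_iff₀ hK0]; linarith [mul_comm K (a i1)]
  have h1β : (0:ℝ) < 1 - β := by linarith
  -- nonnegativity of each term a j / (1 - a j)
  have hterm : ∀ j : A, 0 ≤ a j / (1 - a j) := fun j =>
    div_nonneg (ha0 j) (by linarith [ha1 j])
  have hsumnn : ∀ i : A, 0 ≤ ∑ j ∈ Finset.univ.erase i, a j / (1 - a j) :=
    fun i => Finset.sum_nonneg fun j _ => hterm j
  constructor
  · have h1 : β ≤ β + (1 - β) * ∑ j ∈ Finset.univ.erase i1, a j / (1 - a j) := by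
      nlinarith [hsumnn i1]
    calc β / K = (1 / K) * β := by ring
      _ ≤ a i1 * β := by
        apply mul_le_mul_of_nonneg_right hmax hβ0.le
      _ ≤ a i1 * (β + (1 - β) * ∑ j ∈ Finset.univ.erase i1, a j / (1 - a j)) := by
        apply mul_le_mul_of_nonneg_left h1 (ha0 i1)
  · -- 1 - a i1 = sum over erase i1 ≤ (K-1) * a i2
    have hsplit : a i1 + ∑ j ∈ Finset.univ.erase i1, a j = 1 := by
      rw [← hsum, Finset.add_sum_erase _ a (Finset.mem_univ i1)]
    have hcard : (Finset.univ.erase i1).card = Fintype.card A - 1 := by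
      rw [Finset.card_erase_of_mem (Finset.mem_univ i1), Finset.card_univ]
    have hKnat : 1 ≤ Fintype.card A := by omega
    have hbound : 1 - a i1 ≤ (K - 1) * a i2 := by
      have : ∑ j ∈ Finset.univ.erase i1, a j ≤ ∑ _j ∈ Finset.univ.erase i1, a i2 :=
        Finset.sum_le_sum fun j hj => hi2 j (Finset.mem_erase.1 hj).1
      rw [Finset.sum_const, hcard, nsmul_eq_mul] at this
      have hcast : ((Fintype.card A - 1 : ℕ) : ℝ) = K - 1 := by
        push_cast [hKnat]; ring
      rw [hcast] at this
      linarith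
    have hpos : (0:ℝ) < 1 - a i1 := by linarith [ha1 i1]
    have hi2pos : 0 < a i2 := by nlinarith
    -- sum over erase i2 includes i1
    have hmem : i1 ∈ Finset.univ.erase i2 := Finset.mem_erase.2 ⟨hne.symm, Finset.mem_univ i1⟩
    have hS : a i1 / (1 - a i1) ≤ ∑ j ∈ Finset.univ.erase i2, a j / (1 - a j) :=
      Finset.single_le_sum (fun j _ => hterm j) hmem
    have hkey : 1 / K ^ 2 ≤ a i2 * (a i1 / (1 - a i1)) := by
      have h1 : a i2 / (1 - a i1) ≥ 1 / (K - 1) := by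
        rw [ge_iff_le, div_le_div_iff₀ (by linarith) hpos]
        nlinarith
      have h2 : a i2 * (a i1 / (1 - a i1)) = a i1 * (a i2 / (1 - a i1)) := by ring
      rw [h2]
      have : (1 / K) * (1 / (K - 1)) ≤ a i1 * (a i2 / (1 - a i1)) := by
        apply mul_le_mul hmax h1 (one_div_nonneg.mpr (by linarith)) (ha0 i1)
      calc 1 / K ^ 2 ≤ (1 / K) * (1 / (K - 1)) := by
            rw [div_mul_div_comm, one_mul, div_le_div_iff₀ (by positivity) (by nlinarith)]
            nlinarith
        _ ≤ _ := this
    calc (1 - β) / K ^ 2 = (1 - β) * (1 / K ^ 2) := by ring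
      _ ≤ (1 - β) * (a i2 * (a i1 / (1 - a i1))) :=
        mul_le_mul_of_nonneg_left hkey h1β.le
      _ ≤ a i2 * (β + (1 - β) * ∑ j ∈ Finset.univ.erase i2, a j / (1 - a j)) := by
        have := mul_le_mul_of_nonneg_left hS (mul_nonneg h1β.le hi2pos.le)
        nlinarith [mul_pos hβ0 hi2pos]
end

section
/- TTTS selection probability upper bound: with a : A → [0,1) summing to 1, |A| ≥ 2, β ∈ [0,1], i1 = argmax_j a_j, and ψ_i = a_i(β + (1-β)Σ_{j≠i} a_j/(1-a_j)), for any i ≠ i1 one has ψ_i ≤ a_i / (1 - a_{i1}). -/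
open Finset

theorem ttts_selection_probability_upper_bound
    {A : Type*} [Fintype A] [DecidableEq A] (hA : 2 ≤ Fintype.card A)
    (a : A → ℝ) (β : ℝ) (ha0 : ∀ i, 0 ≤ a i) (ha1 : ∀ i, a i < 1)
    (hsum : ∑ i, a i = 1) (hβ0 : 0 ≤ β) (hβ1 : β ≤ 1)
    (i1 : A) (hi1 : ∀ j, a j ≤ a i1) (i : A) (hi : i ≠ i1) :
    a i * (β + (1 - β) * ∑ j ∈ Finset.univ.erase i, a j / (1 - a j))
      ≤ a i / (1 - a i1) := by
  have h1 : (0:ℝ) < 1 - a i1 := by linarith [ha1 i1]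
  have hsum' : ∑ j ∈ Finset.univ.erase i, a j = 1 - a i := by
    have h := Finset.sum_erase_add Finset.univ a (Finset.mem_univ i)
    rw [hsum] at h
    linarith
  have hS : ∑ j ∈ Finset.univ.erase i, a j / (1 - a j)
      ≤ (1 - a i) / (1 - a i1) := by
    rw [← hsum', Finset.sum_div]
    apply Finset.sum_le_sum
    intro j _
    gcongr
    · exact ha0 j
    · linarith [hi1 j]
  have hc1 : (1:ℝ) ≤ 1 / (1 - a i1) := by
    rw [le_div_iff₀ h1]
    nlinarith [ha0 i1]
  have hc : β + (1 - β) * ∑ j ∈ Finset.univ.erase i, a j / (1 - a j)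
      ≤ 1 / (1 - a i1) := by
    have h2 : (1 - a i) / (1 - a i1) ≤ 1 / (1 - a i1) := by
      gcongr
      linarith [ha0 i]
    nlinarith [hS, hc1]
  calc a i * (β + (1 - β) * ∑ j ∈ Finset.univ.erase i, a j / (1 - a j))
      ≤ a i * (1 / (1 - a i1)) := mul_le_mul_of_nonneg_left hc (ha0 i)
    _ = a i / (1 - a i1) := mul_one_div _ _
end

section
/- For the Gaussian KL divergence d(x,y) = (x-y)^2/(2σ^2), and empirical means μ_i > μ_j with counts T_i, T_j > 0, one has inf over pairs (θ_i, θ_j) with θ_j ≥ θ_i of [T_i d(μ_i, θ_i) + T_j d(μ_j, θ_j)] = (μ_i - μ_j)^2 / (2σ^2 (1/T_i + 1/T_j)). -/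
theorem gaussian_glr_closed_form
    (σ Ti Tj μi μj : ℝ) (hσ : 0 < σ) (hTi : 0 < Ti) (hTj : 0 < Tj) (hμ : μj < μi) :
    IsLeast {z : ℝ | ∃ θi θj : ℝ, θi ≤ θj ∧
        z = Ti * ((μi - θi) ^ 2 / (2 * σ ^ 2)) + Tj * ((μj - θj) ^ 2 / (2 * σ ^ 2))}
      ((μi - μj) ^ 2 / (2 * σ ^ 2 * (1 / Ti + 1 / Tj))) := by
  have hσ2 : (0:ℝ) < σ ^ 2 := by positivity
  have hT : (0:ℝ) < Ti + Tj := by linarith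
  constructor
  · refine ⟨(Ti * μi + Tj * μj) / (Ti + Tj), (Ti * μi + Tj * μj) / (Ti + Tj), le_refl _, ?_⟩
    field_simp
    ring
  · rintro z ⟨θi, θj, hle, rfl⟩
    have ha : μi - μj ≤ (μi - θi) - (μj - θj) := by linarith
    have key : (μi - μj) ^ 2 * (Ti * Tj) ≤
        (Ti * (μi - θi) ^ 2 + Tj * (μj - θj) ^ 2) * (Ti + Tj) := by
      nlinarith [sq_nonneg (Ti * (μi - θi) + Tj * (μj - θj)),
        sq_nonneg ((μi - θi) - (μj - θj)), mul_pos hTi hTj,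
        mul_nonneg (mul_pos hTi hTj).le (sq_nonneg ((μi - θi) - (μj - θj) - (μi - μj))),
        mul_nonneg (mul_pos hTi hTj).le
          (mul_nonneg (sub_nonneg.2 ha) (by linarith : (0:ℝ) ≤ (μi - θi) - (μj - θj) + (μi - μj)))]
    rw [div_le_iff₀ (by positivity)]
    have h2 : (0:ℝ) < 2 * σ ^ 2 := by positivity
    rw [div_add_div _ _ (ne_of_gt hTi) (ne_of_gt hTj)]
    field_simp
    nlinarith [key, sq_nonneg (μi - μj)]
end
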